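/- arXiv:2101.12704 — 5 statements merged into one kernel-verified Lean document; each statement's English description precedes it below -/
import Mathlib

section
/- For every vector u ∈ ℝ^d, the random linear coding compression–decompression pair satisfies the exact contraction identity 𝔼_r‖u − (m/d)·A(r)ᵀ·A(r)·u‖² = (1 − m/d)·‖u‖², where ‖·‖ is the Euclidean norm. -/
/-!
For every sign vector, `A Aᵀ = (d/m) • 1` because `diag(r)² = 1`, so `(m/d) AᵀA` is the orthogonal
projection onto the row space of `A` and Pythagoras gives
`‖u - (m/d) AᵀA u‖² = ‖u‖² - (m/d) ‖A u‖²`. Averaging over the signs kills the cross terms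
`r_k r_l` with `k ≠ l`, and every column of `H` has squared norm `m`, so `𝔼 ‖A u‖² = ‖u‖²`.
-/

open Matrix BigOperators

/-- The random linear coding matrix `A(r) = (1/√m)·H·diag(r)`. -/
noncomputable def rlcA (m d : ℕ) (H : Matrix (Fin m) (Fin d) ℝ) (r : Fin d → ℝ) :
    Matrix (Fin m) (Fin d) ℝ :=
  (Real.sqrt m)⁻¹ • (H * Matrix.diagonal r)

/-- The sign vector in `{−1,+1}^d` encoded by a Boolean vector. -/
def signVec {d : ℕ} (s : Fin d → Bool) : Fin d → ℝ := fun i => if s i then 1 else -1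

theorem EuclideanSpace.norm_symm_equiv_sq {ι : Type*} [Fintype ι] (v : ι → ℝ) :
    ‖(WithLp.equiv 2 (ι → ℝ)).symm v‖ ^ 2 = v ⬝ᵥ v := by
  rw [EuclideanSpace.real_norm_sq_eq]
  simp [dotProduct, sq]

theorem dotProduct_self_sub_inv_smul_transpose_mulVec {ι κ R : Type*} [Fintype ι] [Fintype κ]
    [DecidableEq κ] [Field R] (A : Matrix κ ι R) (c : R) (hA : A * Aᵀ = c • 1) (u : ι → R) :
    (u - c⁻¹ • (Aᵀ *ᵥ (A *ᵥ u))) ⬝ᵥ (u - c⁻¹ • (Aᵀ *ᵥ (A *ᵥ u)))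
      = u ⬝ᵥ u - c⁻¹ * ((A *ᵥ u) ⬝ᵥ (A *ᵥ u)) := by
  set x := A *ᵥ u
  have hcross : u ⬝ᵥ (Aᵀ *ᵥ x) = x ⬝ᵥ x := by
    rw [dotProduct_mulVec, vecMul_transpose]
  have hback : (Aᵀ *ᵥ x) ⬝ᵥ (Aᵀ *ᵥ x) = c * (x ⬝ᵥ x) := by
    rw [dotProduct_mulVec, vecMul_transpose, mulVec_mulVec, hA, smul_mulVec, one_mulVec,
      smul_dotProduct, smul_eq_mul]
  have hcancel : c⁻¹ * c⁻¹ * c = c⁻¹ := by simpa using mul_self_mul_inv c⁻¹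
  simp only [sub_dotProduct, dotProduct_sub, smul_dotProduct, dotProduct_smul, smul_eq_mul,
    hback, dotProduct_comm _ u, hcross]
  linear_combination (x ⬝ᵥ x) * hcancel

section signVec

variable {d : ℕ}

theorem signVec_mul_self (s : Fin d → Bool) (k : Fin d) : signVec s k * signVec s k = 1 := by
  unfold signVec; split <;> norm_num

theorem diagonal_signVec_mul_self (s : Fin d → Bool) :
    diagonal (signVec s) * diagonal (signVec s) = 1 := by
  simp only [diagonal_mul_diagonal, signVec_mul_self, diagonal_one]

theorem sum_signVec_mul_signVec (k l : Fin d) :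
    ∑ s : Fin d → Bool, signVec s k * signVec s l = if k = l then 2 ^ d else 0 := by
  split_ifs with hkl
  · simp [hkl, signVec_mul_self, Finset.card_univ]
  · refine Finset.sum_ninvolution (fun s => Function.update s k (!s k)) (fun s => ?_)
      (fun s _ h => by simpa using congrFun h k) (fun _ => Finset.mem_univ _) (fun s => by simp)
    simp only [signVec, Function.update_self, Function.update_of_ne (Ne.symm hkl)]
    cases s k <;> cases s l <;> norm_num

theorem sum_sq_sum_mul_signVec (a : Fin d → ℝ) :
    ∑ s : Fin d → Bool, (∑ k, a k * signVec s k) ^ 2 = 2 ^ d * ∑ k, a k ^ 2 := by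
  calc ∑ s : Fin d → Bool, (∑ k, a k * signVec s k) ^ 2
      = ∑ s : Fin d → Bool, ∑ k, ∑ l, a k * a l * (signVec s k * signVec s l) := by
        refine Finset.sum_congr rfl fun s _ => ?_
        rw [sq, Finset.sum_mul_sum]
        exact Finset.sum_congr rfl fun k _ => Finset.sum_congr rfl fun l _ => by ring
    _ = ∑ k, ∑ l, a k * a l * ∑ s : Fin d → Bool, signVec s k * signVec s l := by
        simp_rw [Finset.mul_sum]
        rw [Finset.sum_comm]
        exact Finset.sum_congr rfl fun k _ => Finset.sum_comm
    _ = 2 ^ d * ∑ k, a k ^ 2 := by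
        simp [sum_signVec_mul_signVec, Finset.mul_sum, sq, mul_comm]

theorem sum_mulVec_signVec_mul_dotProduct_self {ι : Type*} [Fintype ι]
    (H : Matrix ι (Fin d) ℝ) (u : Fin d → ℝ) :
    ∑ s : Fin d → Bool, (H *ᵥ (signVec s * u)) ⬝ᵥ (H *ᵥ (signVec s * u))
      = 2 ^ d * ∑ k, (∑ i, H i k ^ 2) * u k ^ 2 := by
  have hrow : ∀ s i, (H *ᵥ (signVec s * u)) i = ∑ k, H i k * u k * signVec s k := fun s i => by
    simp only [mulVec, dotProduct, Pi.mul_apply]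
    exact Finset.sum_congr rfl fun k _ => by ring
  simp only [dotProduct, hrow, ← sq]
  rw [Finset.sum_comm]
  simp only [sum_sq_sum_mul_signVec, ← Finset.mul_sum, mul_pow, Finset.sum_mul]
  rw [Finset.sum_comm]

end signVec

section rlcA

variable {m d : ℕ} {H : Matrix (Fin m) (Fin d) ℝ}

theorem inv_sqrt_natCast_mul_self (n : ℕ) : (√(n : ℝ))⁻¹ * (√(n : ℝ))⁻¹ = (n : ℝ)⁻¹ := by
  rw [← mul_inv, Real.mul_self_sqrt n.cast_nonneg]

theorem rlcA_signVec_mul_transpose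
    (horth : H * Hᵀ = (d : ℝ) • (1 : Matrix (Fin m) (Fin m) ℝ)) (s : Fin d → Bool) :
    rlcA m d H (signVec s) * (rlcA m d H (signVec s))ᵀ = ((d : ℝ) / m) • 1 := by
  simp only [rlcA, transpose_smul, transpose_mul, diagonal_transpose, Matrix.smul_mul,
    Matrix.mul_smul, smul_smul, inv_sqrt_natCast_mul_self]
  rw [Matrix.mul_assoc, ← Matrix.mul_assoc (diagonal _), diagonal_signVec_mul_self,
    Matrix.one_mul, horth, smul_smul, div_eq_inv_mul]

theorem rlcA_mulVec (r u : Fin d → ℝ) :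
    rlcA m d H r *ᵥ u = (Real.sqrt m)⁻¹ • (H *ᵥ (r * u)) := by
  rw [rlcA, smul_mulVec, ← mulVec_mulVec]
  congr 2
  ext k
  exact mulVec_diagonal r u k

theorem sum_rlcA_signVec_mulVec_dotProduct_self (hm : 0 < m)
    (hH : ∀ i j, H i j = 1 ∨ H i j = -1) (u : Fin d → ℝ) :
    ∑ s : Fin d → Bool, (rlcA m d H (signVec s) *ᵥ u) ⬝ᵥ (rlcA m d H (signVec s) *ᵥ u)
      = 2 ^ d * (u ⬝ᵥ u) := by
  have hsq : ∀ i k, H i k ^ 2 = 1 := fun i k => by rcases hH i k with h | h <;> simp [h]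
  simp only [rlcA_mulVec, smul_dotProduct, dotProduct_smul, smul_eq_mul, ← Finset.mul_sum,
    sum_mulVec_signVec_mul_dotProduct_self, hsq, Finset.sum_const, Finset.card_univ,
    Fintype.card_fin, nsmul_eq_mul, mul_one]
  have hm' : (m : ℝ) ≠ 0 := by positivity
  rw [← mul_assoc, inv_sqrt_natCast_mul_self, mul_left_comm, inv_mul_cancel_left₀ hm']
  simp only [dotProduct, sq]

end rlcA

theorem rlc_compression_contraction_general (m d : ℕ) (hm : 0 < m)
    (H : Matrix (Fin m) (Fin d) ℝ)
    (hH : ∀ i j, H i j = 1 ∨ H i j = -1)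
    (horth : H * Hᵀ = (d : ℝ) • (1 : Matrix (Fin m) (Fin m) ℝ))
    (u : EuclideanSpace ℝ (Fin d)) :
    ((2 : ℝ) ^ d)⁻¹ *
        ∑ s : Fin d → Bool,
          ‖(WithLp.equiv 2 (Fin d → ℝ)).symm
              (WithLp.equiv 2 (Fin d → ℝ) u - ((m : ℝ) / d) •
                ((rlcA m d H (signVec s))ᵀ *ᵥ
                  (rlcA m d H (signVec s) *ᵥ WithLp.equiv 2 (Fin d → ℝ) u)))‖ ^ 2
      = (1 - (m : ℝ) / d) * ‖u‖ ^ 2 := by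
  set x := WithLp.equiv 2 (Fin d → ℝ) u
  have hu : ‖u‖ ^ 2 = x ⬝ᵥ x := by
    rw [← EuclideanSpace.norm_symm_equiv_sq, Equiv.symm_apply_apply]
  simp only [EuclideanSpace.norm_symm_equiv_sq, ← inv_div (d : ℝ) m,
    dotProduct_self_sub_inv_smul_transpose_mulVec _ _ (rlcA_signVec_mul_transpose horth _),
    Finset.sum_sub_distrib, ← Finset.mul_sum, sum_rlcA_signVec_mulVec_dotProduct_self hm hH,
    Finset.sum_const, Finset.card_univ, Fintype.card_fun, Fintype.card_bool, Fintype.card_fin,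
    nsmul_eq_mul, Nat.cast_pow, Nat.cast_ofNat, hu]
  field_simp

/-- For every vector `u ∈ ℝ^d`, the random linear coding
compression–decompression pair satisfies the exact contraction identity
`𝔼_r‖u − (m/d)·A(r)ᵀ·A(r)·u‖² = (1 − m/d)·‖u‖²` (Euclidean norm), the expectation being
over `r` uniform on `{−1,+1}^d`. -/
theorem rlc_compression_contraction (m d : ℕ) (hm : 0 < m) (hmd : m ≤ d)
    (H : Matrix (Fin m) (Fin d) ℝ)
    (hH : ∀ i j, H i j = 1 ∨ H i j = -1)
    (horth : H * Hᵀ = (d : ℝ) • (1 : Matrix (Fin m) (Fin m) ℝ))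
    (u : EuclideanSpace ℝ (Fin d)) :
    ((2 : ℝ) ^ d)⁻¹ *
        ∑ s : Fin d → Bool,
          ‖(WithLp.equiv 2 (Fin d → ℝ)).symm
              (WithLp.equiv 2 (Fin d → ℝ) u - ((m : ℝ) / d) •
                ((rlcA m d H (signVec s))ᵀ *ᵥ
                  (rlcA m d H (signVec s) *ᵥ WithLp.equiv 2 (Fin d → ℝ) u)))‖ ^ 2
      = (1 - (m : ℝ) / d) * ‖u‖ ^ 2 :=
  rlc_compression_contraction_general m d hm H hH horth u
end

section
/- Let W be a symmetric doubly stochastic K × K real matrix (nonnegative entries, W𝟙 = 𝟙, 𝟙ᵀW = 𝟙ᵀ), let δ = 1 − ‖W − 𝟙𝟙ᵀ/K‖₂ where ‖·‖₂ is the spectral norm, and let ζ ∈ [0, 1]. Then for every d × K real matrix X whose rows each sum to zero (equivalently X·(𝟙𝟙ᵀ/K) = 0), one has ‖X·(I_K + ζ(W − I_K))‖_F ≤ (1 − ζδ)·‖X‖_F. -/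
/-!
Since `X` annihilates the averaging matrix `J = 𝟙𝟙ᵀ/K`, the relaxed step is
`X (I + ζ (W - I)) = X (I + ζ ((W - J) - I)) = (1 - ζ) X + ζ X (W - J)`, so it suffices that
`‖X M‖_F ≤ ‖M‖₂ ‖X‖_F` for every `M`. This holds row by row: the `i`-th row of `X M` is `Mᵀ`
applied to the `i`-th row of `X`, and `‖Mᵀ‖₂ = ‖M‖₂`.
-/

open Matrix BigOperators

/-- The spectral (ℓ²-operator) norm of a real matrix. -/
noncomputable def specNorm {a b : ℕ} (M : Matrix (Fin a) (Fin b) ℝ) : ℝ :=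
  ‖LinearMap.toContinuousLinearMap (Matrix.toEuclideanLin M)‖

/-- The Frobenius norm of a real matrix. -/
noncomputable def frobNorm {a b : ℕ} (M : Matrix (Fin a) (Fin b) ℝ) : ℝ :=
  Real.sqrt (∑ i, ∑ j, (M i j) ^ 2)

section Frobenius

attribute [local instance] Matrix.frobeniusNormedAddCommGroup Matrix.frobeniusNormedSpace

lemma frobNorm_eq_norm {a b : ℕ} (M : Matrix (Fin a) (Fin b) ℝ) : frobNorm M = ‖M‖ := by
  simp [frobNorm, frobenius_norm_def, Real.sqrt_eq_rpow]

lemma frobNorm_add_le {a b : ℕ} (M N : Matrix (Fin a) (Fin b) ℝ) :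
    frobNorm (M + N) ≤ frobNorm M + frobNorm N := by
  simpa only [frobNorm_eq_norm] using norm_add_le M N

lemma frobNorm_smul {a b : ℕ} (c : ℝ) (M : Matrix (Fin a) (Fin b) ℝ) :
    frobNorm (c • M) = |c| * frobNorm M := by
  simp only [frobNorm_eq_norm, norm_smul, Real.norm_eq_abs]

end Frobenius

lemma frobNorm_eq_sqrt_sum_norm_row_sq {a b : ℕ} (M : Matrix (Fin a) (Fin b) ℝ) :
    frobNorm M = √(∑ i, ‖WithLp.toLp 2 (M i)‖ ^ 2) := by
  simp [frobNorm, EuclideanSpace.norm_sq_eq]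

section L2Operator

open scoped Matrix.Norms.L2Operator

lemma specNorm_eq_norm {a b : ℕ} (M : Matrix (Fin a) (Fin b) ℝ) : specNorm M = ‖M‖ := rfl

lemma specNorm_transpose {a b : ℕ} (M : Matrix (Fin a) (Fin b) ℝ) :
    specNorm Mᵀ = specNorm M := by
  simpa only [specNorm_eq_norm, conjTranspose_eq_transpose_of_trivial] using
    l2_opNorm_conjTranspose M

end L2Operator

lemma norm_vecMul_le_specNorm_mul {a b : ℕ} (v : Fin a → ℝ) (M : Matrix (Fin a) (Fin b) ℝ) :
    ‖WithLp.toLp 2 (v ᵥ* M)‖ ≤ specNorm M * ‖WithLp.toLp 2 v‖ := by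
  rw [← specNorm_transpose, ← mulVec_transpose]
  exact (LinearMap.toContinuousLinearMap (Matrix.toEuclideanLin Mᵀ)).le_opNorm (WithLp.toLp 2 v)

lemma frobNorm_mul_le_specNorm_mul {a b c : ℕ} (X : Matrix (Fin a) (Fin b) ℝ)
    (M : Matrix (Fin b) (Fin c) ℝ) :
    frobNorm (X * M) ≤ specNorm M * frobNorm X := by
  have hM : 0 ≤ specNorm M := norm_nonneg _
  rw [frobNorm_eq_sqrt_sum_norm_row_sq, frobNorm_eq_sqrt_sum_norm_row_sq,
    ← Real.sqrt_sq hM, ← Real.sqrt_mul (sq_nonneg _), Finset.mul_sum]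
  gcongr with i
  rw [← mul_pow]
  exact pow_le_pow_left₀ (norm_nonneg _) (norm_vecMul_le_specNorm_mul (X i) M) 2

lemma frobNorm_mul_one_add_smul_sub_one_le {a b : ℕ} (X : Matrix (Fin a) (Fin b) ℝ)
    (A : Matrix (Fin b) (Fin b) ℝ) {ζ : ℝ} (hζ0 : 0 ≤ ζ) (hζ1 : ζ ≤ 1) :
    frobNorm (X * (1 + ζ • (A - 1))) ≤ (1 - ζ * (1 - specNorm A)) * frobNorm X := by
  have hsplit : X * (1 + ζ • (A - 1)) = (1 - ζ) • X + ζ • (X * A) := by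
    simp only [Matrix.mul_add, Matrix.mul_smul, Matrix.mul_sub, Matrix.mul_one, sub_smul, one_smul,
      smul_sub]
    abel
  calc frobNorm (X * (1 + ζ • (A - 1)))
      ≤ (1 - ζ) * frobNorm X + ζ * frobNorm (X * A) := by
        rw [hsplit]
        refine (frobNorm_add_le _ _).trans_eq ?_
        rw [frobNorm_smul, frobNorm_smul, abs_of_nonneg (sub_nonneg.2 hζ1), abs_of_nonneg hζ0]
    _ ≤ (1 - ζ) * frobNorm X + ζ * (specNorm A * frobNorm X) := by
        gcongr
        exact frobNorm_mul_le_specNorm_mul X A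
    _ = (1 - ζ * (1 - specNorm A)) * frobNorm X := by ring

theorem consensus_contraction_general (K d : ℕ)
    (W : Matrix (Fin K) (Fin K) ℝ)
    (ζ : ℝ) (hζ0 : 0 ≤ ζ) (hζ1 : ζ ≤ 1)
    (X : Matrix (Fin d) (Fin K) ℝ)
    (hX : X * (((K : ℝ)⁻¹) • Matrix.of (fun (_ _ : Fin K) => (1 : ℝ))) = 0) :
    frobNorm (X * ((1 : Matrix (Fin K) (Fin K) ℝ) + ζ • (W - 1)))
      ≤ (1 - ζ * (1 - specNorm (W - ((K : ℝ)⁻¹) • Matrix.of (fun (_ _ : Fin K) => (1 : ℝ))))) *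
          frobNorm X := by
  set J : Matrix (Fin K) (Fin K) ℝ := ((K : ℝ)⁻¹) • Matrix.of (fun (_ _ : Fin K) => (1 : ℝ))
  have hXW : X * (1 + ζ • (W - 1)) = X * (1 + ζ • (W - J - 1)) := by
    simp only [Matrix.mul_add, Matrix.mul_smul, Matrix.mul_sub, hX, sub_zero]
  rw [hXW]
  exact frobNorm_mul_one_add_smul_sub_one_le X (W - J) hζ0 hζ1

/-- Let `W` be a symmetric doubly stochastic `K × K` real matrix, let
`δ = 1 − ‖W − 𝟙𝟙ᵀ/K‖₂` (spectral norm), and let `ζ ∈ [0,1]`. Then for every `d × K` real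
matrix `X` whose rows each sum to zero (equivalently `X·(𝟙𝟙ᵀ/K) = 0`), one has
`‖X·(I_K + ζ(W − I_K))‖_F ≤ (1 − ζδ)·‖X‖_F`. -/
theorem consensus_contraction (K d : ℕ) (hK : 0 < K)
    (W : Matrix (Fin K) (Fin K) ℝ) (hsymm : Wᵀ = W)
    (hnonneg : ∀ i j, 0 ≤ W i j)
    (hrow : ∀ i, ∑ j, W i j = 1) (hcol : ∀ j, ∑ i, W i j = 1)
    (ζ : ℝ) (hζ0 : 0 ≤ ζ) (hζ1 : ζ ≤ 1)
    (X : Matrix (Fin d) (Fin K) ℝ)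
    (hX : X * (((K : ℝ)⁻¹) • Matrix.of (fun (_ _ : Fin K) => (1 : ℝ))) = 0) :
    frobNorm (X * ((1 : Matrix (Fin K) (Fin K) ℝ) + ζ • (W - 1)))
      ≤ (1 - ζ * (1 - specNorm (W - ((K : ℝ)⁻¹) • Matrix.of (fun (_ _ : Fin K) => (1 : ℝ))))) *
          frobNorm X :=
  consensus_contraction_general K d W ζ hζ0 hζ1 X hX
end

section
/- Let δ ∈ (0, 1], ω ∈ (0, 1], β ≥ 0, Ñ > 0, ζ₀ > 0, a′ > 0, μ > 0, a > 0 with a·Ñ^{1/4} ≤ a′, and let p be any real number. Define ζ^{(t)} = ζ₀/(Ñ^{1/4}·t/a′ + 1), p̃^{(t)} = δ·ζ^{(t)} − (δ²/4 + 2β²/ω)·(ζ^{(t)})², p^{(t)} = min{p̃^{(t)}, p}, and η^{(t)} = (3.25/μ)·1/(t + a). If p^{(t)} > 0, then for every t ∈ ℕ, (ζ^{(t)})²·t·Ñ ≤ (1/p^{(t)})·(μ/3.25)²·(η^{(t)})²·δ·(ζ₀·a′)³·Ñ^{1/4}. (This is the bound on the accumulated channel-noise term, 'part II', in the proof of Lemma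 5.2.) -/
/-- The adaptive consensus step size `ζ^{(t)} = ζ₀ / (Ñ^{1/4}·t/a′ + 1)`. -/
noncomputable def zetaSeq (ζ₀ Ntil a' : ℝ) (t : ℕ) : ℝ :=
  ζ₀ / (Ntil ^ ((1 : ℝ) / 4) * t / a' + 1)

/-- `p̃^{(t)} = δ·ζ^{(t)} − (δ²/4 + 2β²/ω)·(ζ^{(t)})²`. -/
noncomputable def ptilSeq (δ β ω ζ₀ Ntil a' : ℝ) (t : ℕ) : ℝ :=
  δ * zetaSeq ζ₀ Ntil a' t - (δ ^ 2 / 4 + 2 * β ^ 2 / ω) * (zetaSeq ζ₀ Ntil a' t) ^ 2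

/-- The learning rate `η^{(t)} = (3.25/μ)·1/(t + a)`. -/
noncomputable def etaSeq (μ a : ℝ) (t : ℕ) : ℝ := (3.25 / μ) * (1 / (t + a))

/-!
Since `p^{(t)} ≤ p̃^{(t)} ≤ δ ζ^{(t)}`, the left-hand side is at most `(δ / p^{(t)}) (ζ^{(t)})³ t Ñ`.
Writing `r = Ñ^{1/4}` and `ζ^{(t)} = ζ₀ a′ / (r t + a′)`, the claim reduces to
`t r⁴ (t + a)² ≤ r (r t + a′)³`, which holds factor by factor because `r t ≤ r t + a′` and
`r (t + a) ≤ r t + a′`, the latter being the hypothesis `a r ≤ a′`.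
-/

lemma rpow_one_div_four_pow_four {x : ℝ} (hx : 0 ≤ x) : (x ^ ((1 : ℝ) / 4)) ^ 4 = x := by
  rw [one_div]
  exact_mod_cast Real.rpow_inv_natCast_pow hx (by norm_num : (4 : ℕ) ≠ 0)

lemma zetaSeq_eq_div (ζ₀ Ntil : ℝ) {a' : ℝ} (ha' : a' ≠ 0) (t : ℕ) :
    zetaSeq ζ₀ Ntil a' t = ζ₀ * a' / (Ntil ^ ((1 : ℝ) / 4) * t + a') := by
  rw [zetaSeq, div_add_one ha', div_div_eq_mul_div]

lemma ptilSeq_le_mul_zetaSeq (δ β ζ₀ Ntil a' : ℝ) {ω : ℝ} (hω : 0 ≤ ω) (t : ℕ) :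
    ptilSeq δ β ω ζ₀ Ntil a' t ≤ δ * zetaSeq ζ₀ Ntil a' t := by
  rw [ptilSeq]
  have : 0 ≤ (δ ^ 2 / 4 + 2 * β ^ 2 / ω) * zetaSeq ζ₀ Ntil a' t ^ 2 := by positivity
  linarith

lemma div_mul_etaSeq {μ : ℝ} (hμ : μ ≠ 0) (a : ℝ) (t : ℕ) :
    μ / 3.25 * etaSeq μ a t = 1 / (t + a) := by
  rw [etaSeq]
  field_simp

lemma mul_pow_four_div_cube_le_div_sq {r t a a' : ℝ} (hr : 0 ≤ r) (ht : 0 ≤ t) (ha : 0 < a)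
    (ha' : 0 < a') (hra : r * a ≤ a') :
    t * r ^ 4 / (r * t + a') ^ 3 ≤ r / (t + a) ^ 2 := by
  rw [div_le_div_iff₀ (by positivity) (by positivity)]
  calc t * r ^ 4 * (t + a) ^ 2 = r * ((r * t) * (r * t + r * a) ^ 2) := by ring
    _ ≤ r * ((r * t + a') * (r * t + a') ^ 2) := by gcongr; linarith
    _ = r * (r * t + a') ^ 3 := by ring

theorem accumulated_noise_bound_general (δ β ω Ntil ζ₀ a' μ a p : ℝ)
    (hδ0 : 0 < δ) (hω0 : 0 < ω)
    (hNtil : 0 < Ntil) (hζ0 : 0 < ζ₀) (ha' : 0 < a') (hμ : 0 < μ) (ha : 0 < a)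
    (haa' : a * Ntil ^ ((1 : ℝ) / 4) ≤ a') :
    ∀ t : ℕ, 0 < min (ptilSeq δ β ω ζ₀ Ntil a' t) p →
      (zetaSeq ζ₀ Ntil a' t) ^ 2 * t * Ntil
        ≤ (1 / min (ptilSeq δ β ω ζ₀ Ntil a' t) p) * (μ / 3.25) ^ 2 *
            (etaSeq μ a t) ^ 2 * δ * (ζ₀ * a') ^ 3 * Ntil ^ ((1 : ℝ) / 4) := by
  intro t hP
  set P := min (ptilSeq δ β ω ζ₀ Ntil a' t) p
  have hPζ : P ≤ δ * zetaSeq ζ₀ Ntil a' t :=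
    (min_le_left _ _).trans (ptilSeq_le_mul_zetaSeq δ β ζ₀ Ntil a' hω0.le t)
  have hζ := zetaSeq_eq_div ζ₀ Ntil ha'.ne' t
  set r := Ntil ^ ((1 : ℝ) / 4)
  have hr : 0 < r := Real.rpow_pos_of_pos hNtil _
  have hN : Ntil = r ^ 4 := (rpow_one_div_four_pow_four hNtil.le).symm
  calc zetaSeq ζ₀ Ntil a' t ^ 2 * t * Ntil
      ≤ zetaSeq ζ₀ Ntil a' t ^ 2 * t * Ntil * (δ * zetaSeq ζ₀ Ntil a' t / P) :=
        le_mul_of_one_le_right (by positivity) ((one_le_div hP).2 hPζ)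
    _ = 1 / P * δ * (ζ₀ * a') ^ 3 * (t * r ^ 4 / (r * t + a') ^ 3) := by
        rw [hζ, ← hN]; field_simp
    _ ≤ 1 / P * δ * (ζ₀ * a') ^ 3 * (r / (t + a) ^ 2) := by
        have := mul_pow_four_div_cube_le_div_sq hr.le t.cast_nonneg ha ha' (by linarith)
        gcongr
    _ = 1 / P * (μ / 3.25 * etaSeq μ a t) ^ 2 * δ * (ζ₀ * a') ^ 3 * r := by
        rw [div_mul_etaSeq hμ.ne', div_pow, one_pow]; ring
    _ = _ := by ring

/-- Let `δ ∈ (0,1]`, `ω ∈ (0,1]`, `β ≥ 0`, `Ñ > 0`, `ζ₀ > 0`, `a′ > 0`,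
`μ > 0`, `a > 0` with `a·Ñ^{1/4} ≤ a′`, and `p` any real. With `ζ^{(t)}`, `p̃^{(t)}`,
`p^{(t)} = min{p̃^{(t)}, p}` and `η^{(t)}` as defined, if `p^{(t)} > 0`, then for every
`t ∈ ℕ`, `(ζ^{(t)})²·t·Ñ ≤ (1/p^{(t)})·(μ/3.25)²·(η^{(t)})²·δ·(ζ₀·a′)³·Ñ^{1/4}`. -/
theorem accumulated_noise_bound (δ β ω Ntil ζ₀ a' μ a p : ℝ)
    (hδ0 : 0 < δ) (hδ1 : δ ≤ 1) (hω0 : 0 < ω) (hω1 : ω ≤ 1) (hβ : 0 ≤ β)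
    (hNtil : 0 < Ntil) (hζ0 : 0 < ζ₀) (ha' : 0 < a') (hμ : 0 < μ) (ha : 0 < a)
    (haa' : a * Ntil ^ ((1 : ℝ) / 4) ≤ a') :
    ∀ t : ℕ, 0 < min (ptilSeq δ β ω ζ₀ Ntil a' t) p →
      (zetaSeq ζ₀ Ntil a' t) ^ 2 * t * Ntil
        ≤ (1 / min (ptilSeq δ β ω ζ₀ Ntil a' t) p) * (μ / 3.25) ^ 2 *
            (etaSeq μ a t) ^ 2 * δ * (ζ₀ * a') ^ 3 * Ntil ^ ((1 : ℝ) / 4) :=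
  accumulated_noise_bound_general δ β ω Ntil ζ₀ a' μ a p hδ0 hω0 hNtil hζ0 ha' hμ ha haa'
end

section
/- (Variant of Stich's lemma.) Let μ > 0, a ≥ 1, T a positive integer, and A, B, C ≥ 0 constants. Let (v_t)_{t=0}^{T} and (f_t)_{t=0}^{T−1} be nonnegative real sequences, and set η_t = (3.25/μ)·1/(t + a), w_t = (a + t)², S_T = ∑_{t=0}^{T−1} w_t. If for every t ∈ {0, …, T−1}, v_{t+1} ≤ (1 − η_t·μ)·v_t + η_t·A + η_t²·B + η_t³·C − η_t·f_t, then (1/S_T)·∑_{t=0}^{T−1} w_t·f_t ≤ (μ/3.25)·(a³ − 3.25a²)/S_T·v_0 + A + 1.625·(2a + T)·T/(μ·S_T)·B + 3.25²·T/(μ²·S_T)·C. -/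
open Finset

/-! Multiplying the recursion at step `t` by `w t / η t = (μ / 3.25) (a + t)³` leaves
`(μ / 3.25) ((a + t)³ - 3.25 (a + t)²) v t` on the right and `(μ / 3.25) (a + t)³ v (t + 1)` on the
left; since `3.25 ≥ 3`, the former coefficient at `t + 1` is at most the latter at `t`, so the
weighted inequalities telescope down to `v 0`, and `∑ (a + t) ≤ (2a + T) T / 2` handles the `B` term. -/

theorem sum_range_succ_le_of_step {g r P Q : ℕ → ℝ} (n : ℕ)
    (hstep : ∀ t ≤ n, g t + P t ≤ Q t + r t) (hlink : ∀ t < n, Q (t + 1) ≤ P t)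
    (hP : 0 ≤ P n) :
    ∑ t ∈ range (n + 1), g t ≤ Q 0 + ∑ t ∈ range (n + 1), r t := by
  have hsum : ∑ t ∈ range n, (g t + (Q (t + 1) - Q t)) ≤ ∑ t ∈ range n, r t :=
    sum_le_sum fun t ht ↦ by
      have ht := mem_range.mp ht
      linarith [hstep t ht.le, hlink t ht]
  rw [sum_add_distrib, sum_range_sub] at hsum
  rw [sum_range_succ, sum_range_succ]
  linarith [hstep n le_rfl]

theorem weighted_step_le {μ k x A B C v v' φ : ℝ} (hμ : 0 < μ) (hk : 0 < k) (hx : 0 < x)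
    (h : v' ≤ (1 - k / μ * (1 / x) * μ) * v + k / μ * (1 / x) * A + (k / μ * (1 / x)) ^ 2 * B
      + (k / μ * (1 / x)) ^ 3 * C - k / μ * (1 / x) * φ) :
    x ^ 2 * φ + μ / k * x ^ 3 * v'
      ≤ μ / k * (x ^ 3 - k * x ^ 2) * v + (x ^ 2 * A + k / μ * x * B + (k / μ) ^ 2 * C) := by
  have key := mul_le_mul_of_nonneg_left h (by positivity : 0 ≤ μ / k * x ^ 3)
  have expand : μ / k * x ^ 3 * ((1 - k / μ * (1 / x) * μ) * v + k / μ * (1 / x) * A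
      + (k / μ * (1 / x)) ^ 2 * B + (k / μ * (1 / x)) ^ 3 * C - k / μ * (1 / x) * φ)
      = μ / k * (x ^ 3 - k * x ^ 2) * v + (x ^ 2 * A + k / μ * x * B + (k / μ) ^ 2 * C)
        - x ^ 2 * φ := by
    field_simp
    ring
  linarith

theorem add_one_pow_three_sub_mul_le {k x : ℝ} (hk : 3 ≤ k) (hx : 0 ≤ x) :
    (x + 1) ^ 3 - k * (x + 1) ^ 2 ≤ x ^ 3 := by
  nlinarith [mul_le_mul_of_nonneg_right hk (sq_nonneg (x + 1))]

theorem sum_range_add_cast_add_half (a : ℝ) (T : ℕ) :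
    ∑ t ∈ range T, (a + t + 1 / 2) = (2 * a + T) * T / 2 := by
  induction T with
  | zero => simp
  | succ n ih => rw [sum_range_succ, ih]; push_cast; ring

theorem sum_range_add_cast_le (a : ℝ) (T : ℕ) :
    ∑ t ∈ range T, (a + t) ≤ (2 * a + T) * T / 2 := by
  rw [← sum_range_add_cast_add_half]
  exact sum_le_sum fun t _ ↦ by linarith

theorem sum_weighted_le_of_recursion {μ k a A B C : ℝ} (hμ : 0 < μ) (hk : 3 ≤ k) (ha : 0 < a)
    (hB : 0 ≤ B)
    {v f : ℕ → ℝ} (hv : ∀ t, 0 ≤ v t) (n : ℕ)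
    (hrec : ∀ t ≤ n, v (t + 1) ≤ (1 - k / μ * (1 / (a + t)) * μ) * v t
      + k / μ * (1 / (a + t)) * A + (k / μ * (1 / (a + t))) ^ 2 * B
      + (k / μ * (1 / (a + t))) ^ 3 * C - k / μ * (1 / (a + t)) * f t) :
    ∑ t ∈ range (n + 1), (a + t) ^ 2 * f t
      ≤ μ / k * (a ^ 3 - k * a ^ 2) * v 0 + (∑ t ∈ range (n + 1), (a + t) ^ 2) * A
        + k / μ * ((2 * a + ↑(n + 1)) * ↑(n + 1) / 2) * B
        + ↑(n + 1) * (k / μ) ^ 2 * C := by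
  have hpos (t : ℕ) : 0 < a + t := by positivity
  have htele := sum_range_succ_le_of_step
    (g := fun t ↦ (a + t) ^ 2 * f t) (P := fun t ↦ μ / k * (a + t) ^ 3 * v (t + 1))
    (Q := fun t ↦ μ / k * ((a + t) ^ 3 - k * (a + t) ^ 2) * v t)
    (r := fun t ↦ (a + t) ^ 2 * A + k / μ * (a + t) * B + (k / μ) ^ 2 * C) n
    (fun t ht ↦ weighted_step_le hμ (by linarith) (hpos t) (hrec t ht))
    (fun t _ ↦ by
      have hlink := add_one_pow_three_sub_mul_le hk (hpos t).le
      push_cast [← add_assoc]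
      gcongr
      exact hv _)
    (by have := hv (n + 1); positivity)
  have hB' : (∑ t ∈ range (n + 1), k / μ * (a + t)) * B
      ≤ k / μ * ((2 * a + ↑(n + 1)) * ↑(n + 1) / 2) * B := by
    rw [← mul_sum]
    gcongr
    exact sum_range_add_cast_le a (n + 1)
  simp only [sum_add_distrib, ← sum_mul, sum_const, card_range, nsmul_eq_mul,
    Nat.cast_zero, add_zero] at htele
  linarith

theorem stich_lemma_variant_general (μ a : ℝ) (hμ : 0 < μ) (ha : 1 ≤ a)
    (T : ℕ) (hT : 0 < T)
    (A B C : ℝ) (hB : 0 ≤ B)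
    (v f : ℕ → ℝ) (hv : ∀ t, 0 ≤ v t)
    (η : ℕ → ℝ) (hη : ∀ t : ℕ, η t = (3.25 / μ) * (1 / ((t : ℝ) + a)))
    (w : ℕ → ℝ) (hw : ∀ t : ℕ, w t = (a + (t : ℝ)) ^ 2)
    (S : ℝ) (hS : S = ∑ t ∈ Finset.range T, w t)
    (hrec : ∀ t ∈ Finset.range T,
      v (t + 1) ≤ (1 - η t * μ) * v t + η t * A + (η t) ^ 2 * B + (η t) ^ 3 * C
        - η t * f t) :
    (1 / S) * ∑ t ∈ Finset.range T, w t * f t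
      ≤ (μ / 3.25) * (a ^ 3 - 3.25 * a ^ 2) / S * v 0 + A
        + 1.625 * (2 * a + T) * T / (μ * S) * B
        + 3.25 ^ 2 * T / (μ ^ 2 * S) * C := by
  obtain ⟨n, rfl⟩ : ∃ n, T = n + 1 := ⟨T - 1, by omega⟩
  have hSpos : 0 < S :=
    hS ▸ sum_pos (fun t _ ↦ hw t ▸ by positivity) nonempty_range_add_one
  have hsum := sum_weighted_le_of_recursion (k := 3.25) (a := a) (A := A) (C := C) (f := f)
      hμ (by norm_num) (by linarith) hB hv n fun t ht ↦ by
    simpa only [hη, add_comm (t : ℝ)] using hrec t (mem_range.mpr (by omega))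
  simp only [← hw, ← hS] at hsum
  rw [one_div_mul_eq_div, div_le_iff₀ hSpos]
  calc ∑ t ∈ range (n + 1), w t * f t
      ≤ μ / 3.25 * (a ^ 3 - 3.25 * a ^ 2) * v 0 + S * A
        + 3.25 / μ * ((2 * a + ↑(n + 1)) * ↑(n + 1) / 2) * B
        + ↑(n + 1) * (3.25 / μ) ^ 2 * C := hsum
    _ = _ := by field_simp; ring

/-- Variant of Stich's lemma: Let `μ > 0`, `a ≥ 1`, `T` a positive integer,
`A, B, C ≥ 0`, and nonnegative sequences `(v_t)`, `(f_t)` with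
`η_t = (3.25/μ)/(t + a)`, `w_t = (a + t)²`, `S_T = ∑_{t<T} w_t`. If for every `t < T`,
`v_{t+1} ≤ (1 − η_t μ)v_t + η_t A + η_t² B + η_t³ C − η_t f_t`, then
`(1/S_T)∑_{t<T} w_t f_t ≤ (μ/3.25)(a³ − 3.25a²)/S_T·v_0 + A + 1.625(2a+T)T/(μS_T)·B
 + 3.25²T/(μ²S_T)·C`. -/
theorem stich_lemma_variant (μ a : ℝ) (hμ : 0 < μ) (ha : 1 ≤ a)
    (T : ℕ) (hT : 0 < T)
    (A B C : ℝ) (hA : 0 ≤ A) (hB : 0 ≤ B) (hC : 0 ≤ C)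
    (v f : ℕ → ℝ) (hv : ∀ t, 0 ≤ v t) (hf : ∀ t, 0 ≤ f t)
    (η : ℕ → ℝ) (hη : ∀ t : ℕ, η t = (3.25 / μ) * (1 / ((t : ℝ) + a)))
    (w : ℕ → ℝ) (hw : ∀ t : ℕ, w t = (a + (t : ℝ)) ^ 2)
    (S : ℝ) (hS : S = ∑ t ∈ Finset.range T, w t)
    (hrec : ∀ t ∈ Finset.range T,
      v (t + 1) ≤ (1 - η t * μ) * v t + η t * A + (η t) ^ 2 * B + (η t) ^ 3 * C
        - η t * f t) :
    (1 / S) * ∑ t ∈ Finset.range T, w t * f t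
      ≤ (μ / 3.25) * (a ^ 3 - 3.25 * a ^ 2) / S * v 0 + A
        + 1.625 * (2 * a + T) * T / (μ * S) * B
        + 3.25 ^ 2 * T / (μ ^ 2 * S) * C :=
  stich_lemma_variant_general μ a hμ ha T hT A B C hB v f hv η hη w hw S hS hrec
end

section
/- Let q ∈ (0, 1], C ≥ 0, μ > 0, and a ≥ 5/q, and set η_t = (3.25/μ)·1/(t + a). Let (e_t)_{t≥0} be a nonnegative real sequence with e_0 = 0 satisfying, for every t ∈ ℕ, e_{t+1} ≤ (1 − q/2)·e_t + (1/q)·η_t²·C. Then for every t ∈ ℕ, e_t ≤ (10/q²)·η_t²·C. (This is the decay estimate for the error sequence e^{(t)} = ∑_i 𝔼‖θ̄^{(t)} − θ_i^{(t)}‖² + ∑_i 𝔼‖θ̂_i^{(t+1)} − θ_i^{(t+1/2)}‖², applied with q = p^{(T)}(δ, ω) in the proof of Theorem 5.1.) -/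
/-!
Induction on `t` with the bound `B_t = (10/q²) η_t² C` itself as the invariant: one step of the
recursion maps `B_t` to `((1 - q/2)·10/q² + 1/q) η_t² C = ((10 - 4q)/q²) η_t² C`, and this is at
most `B_{t+1}` because `η_{t+1}/η_t = x/(x+1)` with `x = t + a ≥ 5/q`, so the contraction `1 - q/2`
beats the slower decay of the step size.
-/

theorem le_of_le_mul_add_of_supersolution {ρ : ℝ} {e b B : ℕ → ℝ} (hρ : 0 ≤ ρ)
    (hrec : ∀ t, e (t + 1) ≤ ρ * e t + b t) (h0 : e 0 ≤ B 0)
    (hB : ∀ t, ρ * B t + b t ≤ B (t + 1)) : ∀ t, e t ≤ B t := by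
  intro t
  induction t with
  | zero => exact h0
  | succ t ih =>
    calc e (t + 1) ≤ ρ * e t + b t := hrec t
      _ ≤ ρ * B t + b t := by gcongr
      _ ≤ B (t + 1) := hB t

theorem inv_sq_succ_bound {q x : ℝ} (hq : 0 < q) (hx : 5 ≤ q * x) :
    ((1 - q / 2) * (10 / q ^ 2) + 1 / q) * (1 / x) ^ 2 ≤ 10 / q ^ 2 * (1 / (x + 1)) ^ 2 := by
  have hx0 : 0 < x := pos_of_mul_pos_right (by linarith) hq.le
  -- `(10 - 4q)(x + 1)² ≤ 10x²`, after expanding both squares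
  have key : 10 * (2 * x + 1) ≤ 4 * q * (x + 1) ^ 2 := by
    calc 10 * (2 * x + 1) ≤ 4 * 5 * (x + 1) := by linarith
      _ ≤ 4 * (q * x) * (x + 1) := by gcongr
      _ ≤ 4 * q * (x + 1) ^ 2 := by nlinarith
  have lhs : ((1 - q / 2) * (10 / q ^ 2) + 1 / q) * (1 / x) ^ 2 = (10 - 4 * q) / (q ^ 2 * x ^ 2) := by
    field_simp; ring
  have rhs : 10 / q ^ 2 * (1 / (x + 1)) ^ 2 = 10 / (q ^ 2 * (x + 1) ^ 2) := by
    field_simp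
  rw [lhs, rhs, div_le_div_iff₀ (by positivity) (by positivity)]
  nlinarith [mul_le_mul_of_nonneg_left key (sq_nonneg q)]

theorem error_sequence_decay_general (q C μ a : ℝ)
    (hq0 : 0 < q) (hq1 : q ≤ 1) (hC : 0 ≤ C) (ha : 5 / q ≤ a)
    (η : ℕ → ℝ) (hη : ∀ t : ℕ, η t = (3.25 / μ) * (1 / ((t : ℝ) + a)))
    (e : ℕ → ℝ) (he0 : e 0 = 0)
    (hrec : ∀ t : ℕ, e (t + 1) ≤ (1 - q / 2) * e t + (1 / q) * (η t) ^ 2 * C) :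
    ∀ t : ℕ, e t ≤ (10 / q ^ 2) * (η t) ^ 2 * C := by
  refine le_of_le_mul_add_of_supersolution (by linarith) hrec (by rw [he0]; positivity) fun t ↦ ?_
  have hx : 5 ≤ q * ((t : ℝ) + a) := by
    calc (5 : ℝ) = q * (5 / q) := by field_simp
      _ ≤ q * ((t : ℝ) + a) := by gcongr; linarith [t.cast_nonneg (α := ℝ)]
  rw [hη, hη, Nat.cast_succ, add_right_comm]
  calc (1 - q / 2) * (10 / q ^ 2 * (3.25 / μ * (1 / (t + a))) ^ 2 * C)
        + 1 / q * (3.25 / μ * (1 / (t + a))) ^ 2 * C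
      = ((1 - q / 2) * (10 / q ^ 2) + 1 / q) * (1 / (t + a)) ^ 2 * (3.25 / μ) ^ 2 * C := by ring
    _ ≤ 10 / q ^ 2 * (1 / (t + a + 1)) ^ 2 * (3.25 / μ) ^ 2 * C := by
        gcongr ?_ * _ * _; exact inv_sq_succ_bound hq0 hx
    _ = 10 / q ^ 2 * (3.25 / μ * (1 / (t + a + 1))) ^ 2 * C := by ring

/-- Let `q ∈ (0,1]`, `C ≥ 0`, `μ > 0`, `a ≥ 5/q`, and
`η_t = (3.25/μ)·1/(t + a)`. If the nonnegative sequence `(e_t)` with `e_0 = 0` satisfies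
`e_{t+1} ≤ (1 − q/2)e_t + (1/q)η_t² C` for every `t`, then for every `t`,
`e_t ≤ (10/q²)η_t² C`. -/
theorem error_sequence_decay (q C μ a : ℝ)
    (hq0 : 0 < q) (hq1 : q ≤ 1) (hC : 0 ≤ C) (hμ : 0 < μ) (ha : 5 / q ≤ a)
    (η : ℕ → ℝ) (hη : ∀ t : ℕ, η t = (3.25 / μ) * (1 / ((t : ℝ) + a)))
    (e : ℕ → ℝ) (he : ∀ t, 0 ≤ e t) (he0 : e 0 = 0)
    (hrec : ∀ t : ℕ, e (t + 1) ≤ (1 - q / 2) * e t + (1 / q) * (η t) ^ 2 * C) :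
    ∀ t : ℕ, e t ≤ (10 / q ^ 2) * (η t) ^ 2 * C :=
  error_sequence_decay_general q C μ a hq0 hq1 hC ha η hη e he0 hrec
end
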